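/- If A is real skew-symmetric and x^R ∈ K_q(A², Ab), then A(b - Ax^R) ∈ K_{q+1}(A², Ab), and hence A(b - Ax^R) is orthogonal to K_{q+1}(A², b). -/

import Mathlib

open Matrix

def krylov {n : ℕ} (M : Matrix (Fin n) (Fin n) ℝ) (v : Fin n → ℝ) (m : ℕ) :
    Submodule ℝ (Fin n → ℝ) :=
  Submodule.span ℝ ((fun k => (M ^ k) *ᵥ v) '' Set.Iio m)

noncomputable def enorm {n : ℕ} (v : Fin n → ℝ) : ℝ := Real.sqrt (∑ i, v i ^ 2)

/-!
Since `A` is skew, `x ⬝ᵥ A ^ k *ᵥ x = 0` for every odd `k`, so `A ^ i *ᵥ b` and `A ^ j *ᵥ b` are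
orthogonal whenever `i + j` is odd. Hence the Krylov spaces `K(A², b)` (even powers) and
`K(A², A b)` (odd powers) are orthogonal, and `A (b - A x) = A b - A² x` lies in the second one
because multiplication by `A²` moves `K_q(A², A b)` into `K_{q+1}(A², A b)`.
-/

section Skew

variable {ι R : Type*} [Fintype ι] [DecidableEq ι] [CommRing R]

theorem transpose_pow_eq_neg_of_odd {A : Matrix ι ι R} (hA : Aᵀ = -A) {k : ℕ} (hk : Odd k) :
    (A ^ k)ᵀ = -A ^ k := by
  rw [transpose_pow, hA, hk.neg_pow]

omit [DecidableEq ι] in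
theorem dotProduct_mulVec_self_eq_zero [IsAddTorsionFree R] {A : Matrix ι ι R} (hA : Aᵀ = -A)
    (x : ι → R) : x ⬝ᵥ A *ᵥ x = 0 := by
  refine self_eq_neg.mp ?_
  calc x ⬝ᵥ A *ᵥ x = Aᵀ *ᵥ x ⬝ᵥ x := by rw [dotProduct_mulVec, mulVec_transpose]
    _ = -(x ⬝ᵥ A *ᵥ x) := by rw [hA, neg_mulVec, neg_dotProduct, dotProduct_comm]

theorem pow_mulVec_dotProduct_pow_mulVec_eq_zero [IsAddTorsionFree R] {A : Matrix ι ι R}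
    (hA : Aᵀ = -A) (x : ι → R) {i j : ℕ} (hij : Odd (i + j)) :
    A ^ i *ᵥ x ⬝ᵥ A ^ j *ᵥ x = 0 := by
  have hodd : x ⬝ᵥ A ^ (i + j) *ᵥ x = 0 :=
    dotProduct_mulVec_self_eq_zero (transpose_pow_eq_neg_of_odd hA hij) x
  rw [← vecMul_transpose, ← dotProduct_mulVec, mulVec_mulVec, transpose_pow, hA]
  rcases Nat.even_or_odd i with hi | hi
  · rw [hi.neg_pow, ← pow_add, hodd]
  · rw [hi.neg_pow, neg_mul, neg_mulVec, dotProduct_neg, ← pow_add, hodd, neg_zero]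

end Skew

theorem dotProduct_eq_zero_of_mem_span {ι R : Type*} [Fintype ι] [CommSemiring R]
    {s t : Set (ι → R)} (h : ∀ x ∈ s, ∀ y ∈ t, x ⬝ᵥ y = 0) {x y : ι → R}
    (hx : x ∈ Submodule.span R s) (hy : y ∈ Submodule.span R t) : x ⬝ᵥ y = 0 := by
  induction hx, hy using Submodule.span_induction₂ with
  | mem_mem x y hx hy => exact h x hx y hy
  | zero_left => exact zero_dotProduct _
  | zero_right => exact dotProduct_zero _
  | add_left x y z _ _ _ hxz hyz => rw [add_dotProduct, hxz, hyz, add_zero]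
  | add_right x y z _ _ _ hxy hxz => rw [dotProduct_add, hxy, hxz, add_zero]
  | smul_left r x y _ _ hxy => rw [smul_dotProduct, hxy, smul_zero]
  | smul_right r x y _ _ hxy => rw [dotProduct_smul, hxy, smul_zero]

section Krylov

variable {n : ℕ} {M : Matrix (Fin n) (Fin n) ℝ} {v : Fin n → ℝ} {m : ℕ}

theorem pow_mulVec_mem_krylov {k : ℕ} (hk : k < m) : M ^ k *ᵥ v ∈ krylov M v m :=
  Submodule.subset_span ⟨k, hk, rfl⟩

theorem self_mem_krylov_succ : v ∈ krylov M v (m + 1) := by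
  simpa using pow_mulVec_mem_krylov (M := M) (v := v) m.succ_pos

theorem mulVec_mem_krylov_succ {x : Fin n → ℝ} (hx : x ∈ krylov M v m) :
    M *ᵥ x ∈ krylov M v (m + 1) := by
  suffices krylov M v m ≤ (krylov M v (m + 1)).comap (toLin' M) from this hx
  refine Submodule.span_le.mpr ?_
  rintro _ ⟨k, hk, rfl⟩
  simpa [mulVec_mulVec, ← pow_succ'] using pow_mulVec_mem_krylov (M := M) (v := v)
    (Nat.succ_lt_succ hk)

end Krylov

theorem dotProduct_eq_zero_of_mem_krylov_sq {n : ℕ} {A : Matrix (Fin n) (Fin n) ℝ}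
    (hA : Aᵀ = -A) {b x y : Fin n → ℝ} {k m : ℕ} (hx : x ∈ krylov (A ^ 2) b k)
    (hy : y ∈ krylov (A ^ 2) (A *ᵥ b) m) : x ⬝ᵥ y = 0 := by
  refine dotProduct_eq_zero_of_mem_span ?_ hx hy
  rintro _ ⟨i, -, rfl⟩ _ ⟨j, -, rfl⟩
  dsimp only
  rw [← pow_mul, ← pow_mul, mulVec_mulVec, ← pow_succ]
  exact pow_mulVec_dotProduct_pow_mulVec_eq_zero hA b ⟨i + j, by ring⟩

theorem cgnr_Aresidual_in_odd_krylov {n : ℕ} (A : Matrix (Fin n) (Fin n) ℝ)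
    (hA : Aᵀ = -A) (b xR : Fin n → ℝ) (q : ℕ)
    (hxR : xR ∈ krylov (A ^ 2) (A *ᵥ b) q) :
    A *ᵥ (b - A *ᵥ xR) ∈ krylov (A ^ 2) (A *ᵥ b) (q + 1) ∧
      ∀ p ∈ krylov (A ^ 2) b (q + 1), p ⬝ᵥ (A *ᵥ (b - A *ᵥ xR)) = 0 := by
  have hres : A *ᵥ (b - A *ᵥ xR) ∈ krylov (A ^ 2) (A *ᵥ b) (q + 1) := by
    rw [mulVec_sub, mulVec_mulVec, ← sq]
    exact sub_mem self_mem_krylov_succ (mulVec_mem_krylov_succ hxR)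
  exact ⟨hres, fun p hp => dotProduct_eq_zero_of_mem_krylov_sq hA hp hres⟩
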